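/- arXiv:1809.00133 — 2 statements merged into one kernel-verified Lean document; each statement's English description precedes it below -/
import Mathlib

section
/- The ideal I has linear relations if and only if, for all minimal generators u, v of I, the induced subgraph G_I^{(u,v)} is connected. -/
open MvPolynomial Finset

attribute [local instance] Classical.propDecidable

/-- The (first linear) syzygy graph of a squarefree monomial ideal whose generators
have supports `F i`, all of cardinality `d`: vertices are the generators, and two
generators are adjacent iff their supports meet in `d - 1` elements (equivalently,
there are variables `x, y` with `x * u i = y * u j`). -/
def syzGraph {n m : ℕ} (F : Fin m → Finset (Fin n)) (d : ℕ) : SimpleGraph (Fin m) where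
  Adj i j := i ≠ j ∧ (F i ∩ F j).card + 1 = d
  symm := by
    constructor
    intro i j h
    exact ⟨h.1.symm, by rw [Finset.inter_comm]; exact h.2⟩
  loopless := by constructor; intro i h; exact h.1 rfl

/-- The map `φ : S^ι → S`, `e i ↦ u i`. -/
noncomputable def phi {R : Type*} [CommRing R] {ι : Type*} [Fintype ι] (u : ι → R) :
    (ι → R) →ₗ[R] R where
  toFun c := ∑ i, c i * u i
  map_add' a b := by simp [add_mul, Finset.sum_add_distrib]
  map_smul' r a := by simp [Finset.mul_sum, mul_assoc]

/-- The set of linear syzygies `x_a e_i - x_b e_j` with `x_a u_i = x_b u_j`. -/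
def linSyz {k : Type*} [Field k] {n : ℕ} {ι : Type*} [DecidableEq ι]
    (u : ι → MvPolynomial (Fin n) k) : Set (ι → MvPolynomial (Fin n) k) :=
  { w | ∃ (i j : ι) (a b : Fin n), X a * u i = X b * u j ∧
      w = Pi.single i (X a) - Pi.single j (X b) }

/-- `I = (u i : i)` has linear relations: `ker φ` is generated by the linear syzygies. -/
def HasLinRel {k : Type*} [Field k] {n : ℕ} {ι : Type*} [Fintype ι] [DecidableEq ι]
    (u : ι → MvPolynomial (Fin n) k) : Prop :=
  Submodule.span (MvPolynomial (Fin n) k) (linSyz u) = LinearMap.ker (phi u)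

/-- `I = (u 1, …, u m)` has linear quotients: for some ordering of the generators, each
colon ideal `(u_{σ 1}, …, u_{σ (i-1)}) : u_{σ i}` is generated by a subset of the variables. -/
def LinQuot {k : Type*} [Field k] {n m : ℕ} (u : Fin m → MvPolynomial (Fin n) k) : Prop :=
  ∃ σ : Equiv.Perm (Fin m), ∀ i : Fin m, i.val ≠ 0 →
    ∃ T : Set (Fin n),
      Submodule.colon (Ideal.span ((fun j => u (σ j)) '' {j : Fin m | j < i}))
        (Ideal.span {u (σ i)}) = Ideal.span (X '' T)

/-- Variable-decomposability of a monomial ideal given by its (finite) minimal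
generating set `G`: either `G` is a singleton (principal ideal), or there is a shedding
variable `x l` such that both `I_{x l}` and `I^{x l}` are variable-decomposable. -/
inductive VarDecomp {k : Type*} [Field k] {n : ℕ} :
    Finset (MvPolynomial (Fin n) k) → Prop
  | principal (u : MvPolynomial (Fin n) k) : VarDecomp {u}
  | shed (G : Finset (MvPolynomial (Fin n) k)) (l : Fin n)
      (hne : (G.filter fun u => ¬ X l ∣ u).Nonempty)
      (hshed : ∀ u ∈ G.filter (fun u => ¬ X l ∣ u),
        ∃ v ∈ G.filter (fun u => X l ∣ u),
          Submodule.colon (Ideal.span {v}) (Ideal.span {u}) = Ideal.span {X l})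
      (h1 : VarDecomp (G.filter fun u => ¬ X l ∣ u))
      (h2 : VarDecomp (G.filter fun u => X l ∣ u)) : VarDecomp G

/-!
Everything is multigraded. In multidegree `μ` an element of `ker φ` is recorded by the
coefficients `c x` of `x^μ / u x` over the generators `u x` dividing `x^μ`, subject only to
`∑ c x = 0`; the linear syzygies contribute exactly the span of the vectors `e a - e b` over the
edges `ab` of the syzygy graph induced on these generators, because the syzygy of an edge lives
in degree `lcm (u a) (u b)` and hence in every degree divisible by it. That span is the whole
sum-zero space iff the induced graph is connected. For `μ = lcm u v` the induced graph is
`G_I^{(u,v)}`, and these graphs control all the others: two generators dividing `x^μ` are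
already joined inside the graph of their own lcm.
-/

namespace SimpleGraph

variable {V : Type*} {k : Type*} [CommRing k] [DecidableEq V] {G : SimpleGraph V}

variable (k G) in
def edgeSpan : Submodule k (V → k) :=
  Submodule.span k {v | ∃ x y, G.Adj x y ∧ Pi.single x 1 - Pi.single y 1 = v}

lemma Reachable.single_sub_single_mem_edgeSpan {a b : V} (h : G.Reachable a b) :
    Pi.single a 1 - Pi.single b 1 ∈ G.edgeSpan k := by
  obtain ⟨w⟩ := h
  induction w with
  | nil => simp
  | cons hadj _ ih =>
    rw [← sub_add_sub_cancel _ (Pi.single _ 1) _]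
    exact add_mem (Submodule.subset_span ⟨_, _, hadj, rfl⟩) ih

lemma Reachable.of_single_sub_single_mem_edgeSpan [Nontrivial k] [Fintype V] {a b : V}
    (h : Pi.single a 1 - Pi.single b 1 ∈ G.edgeSpan k) : G.Reachable a b := by
  let f : (V → k) →ₗ[k] k := ∑ x ∈ univ.filter (G.Reachable a), LinearMap.proj x
  have hf : ∀ x, f (Pi.single x 1) = if G.Reachable a x then 1 else 0 := by
    intro x
    simp [f, Finset.sum_pi_single']
  have hspan : G.edgeSpan k ≤ LinearMap.ker f := by
    refine Submodule.span_le.mpr ?_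
    rintro _ ⟨x, y, hxy, rfl⟩
    have hxy' : G.Reachable a x ↔ G.Reachable a y :=
      ⟨fun h => h.trans hxy.reachable, fun h => h.trans hxy.symm.reachable⟩
    simp [hf, hxy']
  by_contra hab
  simpa [hf, hab] using hspan h

lemma Preconnected.mem_edgeSpan_of_sum_eq_zero [Fintype V] (hG : G.Preconnected) {v : V → k}
    (hv : ∑ x, v x = 0) : v ∈ G.edgeSpan k := by
  rcases isEmpty_or_nonempty V with hV | ⟨⟨a⟩⟩
  · rw [Subsingleton.elim v 0]
    exact zero_mem _
  have hsum : v = ∑ x, v x • (Pi.single x 1 - Pi.single a 1) := by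
    simp only [smul_sub, sum_sub_distrib, ← sum_smul, hv, zero_smul, sub_zero]
    ext y
    simp [Finset.sum_apply, Pi.single_apply]
  rw [hsum]
  exact sum_mem fun x _ => Submodule.smul_mem _ _ (hG x a).single_sub_single_mem_edgeSpan

variable {ι P : Type*} [SemilatticeSup P] (G : SimpleGraph ι) (α : ι → P)

lemma preconnected_induce_le_of_reachable
    (h : ∀ i j, (G.induce {x | α x ≤ α i ⊔ α j}).Reachable ⟨i, le_sup_left⟩ ⟨j, le_sup_right⟩)
    (μ : P) : (G.induce {x | α x ≤ μ}).Preconnected := by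
  rintro ⟨i, hi⟩ ⟨j, hj⟩
  exact (h i j).map (G.induceHomOfLE fun x hx => le_trans hx (sup_le hi hj)).toHom

lemma forall_connected_induce_le_sup_iff :
    (∀ i j, (G.induce {x | α x ≤ α i ⊔ α j}).Connected) ↔
      ∀ μ, (G.induce {x | α x ≤ μ}).Preconnected :=
  ⟨fun h => G.preconnected_induce_le_of_reachable α fun i j => (h i j).preconnected _ _,
    fun h i _ => (connected_iff _).mpr ⟨h _, ⟨⟨i, le_sup_left⟩⟩⟩⟩

end SimpleGraph

section Multigraded

variable {σ ι k : Type*} [CommRing k] (α : ι → σ →₀ ℕ) (μ : σ →₀ ℕ)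

noncomputable def degProj : (ι → MvPolynomial σ k) →ₗ[k] ({x | α x ≤ μ} → k) :=
  LinearMap.pi fun x => lcoeff k (μ - α x) ∘ₗ LinearMap.proj x.1

noncomputable def degIncl : ({x | α x ≤ μ} → k) →ₗ[k] (ι → MvPolynomial σ k) :=
  LinearMap.pi fun x => if h : α x ≤ μ then monomial (μ - α x) ∘ₗ LinearMap.proj ⟨x, h⟩ else 0

variable {α μ}

lemma degProj_apply (w : ι → MvPolynomial σ k) (x : {x | α x ≤ μ}) :
    degProj α μ w x = coeff (μ - α x) (w x) := rfl

lemma degIncl_apply (c : {x | α x ≤ μ} → k) (x : ι) :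
    degIncl α μ c x = if h : α x ≤ μ then monomial (μ - α x) (c ⟨x, h⟩) else 0 := by
  simp only [degIncl, LinearMap.pi_apply]
  split_ifs <;> rfl

lemma degIncl_single [DecidableEq ι] (x : {x | α x ≤ μ}) (c : k) :
    degIncl α μ (Pi.single x c) = Pi.single x.1 (monomial (μ - α x) c) := by
  ext1 y
  rw [degIncl_apply]
  rcases eq_or_ne y x.1 with rfl | hy
  · rw [dif_pos (show α x.1 ≤ μ from x.2)]
    simp
  · split_ifs with h
    · rw [Pi.single_eq_of_ne hy, Pi.single_eq_of_ne (fun e => hy (congrArg Subtype.val e)),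
        map_zero]
    · rw [Pi.single_eq_of_ne hy]

lemma degProj_single_monomial [DecidableEq ι] (a : ι) (δ : σ →₀ ℕ) (c : k) :
    degProj α μ (Pi.single a (monomial δ c)) =
      if h : δ + α a = μ then Pi.single ⟨a, show α a ≤ μ from h ▸ le_add_self⟩ c else 0 := by
  ext ⟨x, hx⟩
  rw [degProj_apply]
  rcases eq_or_ne x a with rfl | hxa
  · have : δ = μ - α x ↔ δ + α x = μ := (eq_tsub_iff_add_eq_of_le hx)
    by_cases h : δ + α x = μ <;> simp [coeff_monomial, h, this]
  · rw [Pi.single_eq_of_ne hxa, coeff_zero]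
    split_ifs <;> simp [hxa]

variable [Fintype ι]

variable (α) in
lemma exists_sum_degIncl_degProj (w : ι → MvPolynomial σ k) :
    ∃ M : Finset (σ →₀ ℕ), ∑ μ ∈ M, degIncl α μ (degProj α μ w) = w := by
  refine ⟨univ.biUnion fun x => (w x).support.map (addRightEmbedding (α x)), ?_⟩
  ext1 x
  simp only [Finset.sum_apply, degIncl_apply, degProj_apply]
  rw [← Finset.sum_subset (subset_biUnion_of_mem _ (mem_univ x)), sum_map]
  · simp [support_sum_monomial_coeff]
  · intro μ _ hμ
    split_ifs with h
    · have : μ - α x ∉ (w x).support := fun hs =>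
        hμ (mem_map.mpr ⟨_, hs, tsub_add_cancel_of_le h⟩)
      simp [notMem_support_iff.mp this]
    · rfl

lemma sum_degProj_eq_coeff_phi (w : ι → MvPolynomial σ k) :
    ∑ x, degProj α μ w x = coeff μ (phi (fun i => monomial (α i) (1 : k)) w) := by
  simp only [phi, LinearMap.coe_mk, AddHom.coe_mk, coeff_sum, coeff_mul_monomial', mul_one,
    ← Finset.sum_filter, degProj_apply]
  exact (Finset.sum_subtype _ (fun x => by simp) (fun x => coeff (μ - α x) (w x))).symm

lemma mem_of_forall_degIncl_mem {P : Submodule k (ι → MvPolynomial σ k)}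
    (hP : ∀ μ (c : {x | α x ≤ μ} → k), ∑ x, c x = 0 → degIncl α μ c ∈ P)
    {w : ι → MvPolynomial σ k} (hw : w ∈ LinearMap.ker (phi fun i => monomial (α i) (1 : k))) :
    w ∈ P := by
  obtain ⟨M, hM⟩ := exists_sum_degIncl_degProj α w
  rw [← hM]
  refine sum_mem fun μ _ => hP μ _ ?_
  rw [sum_degProj_eq_coeff_phi, LinearMap.mem_ker.mp hw, coeff_zero]

end Multigraded

lemma Finsupp.single_one_add_eq_sup {σ : Type*} {s t : σ →₀ ℕ} {p q : σ} (hst : s ≠ t)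
    (h : single p 1 + s = single q 1 + t) : single p 1 + s = s ⊔ t := by
  have hpq : p ≠ q := by
    rintro rfl
    exact hst (add_left_cancel h)
  ext l
  have hl := DFunLike.congr_fun h l
  simp only [Finsupp.coe_add, Pi.add_apply, Finsupp.single_apply, Finsupp.sup_apply] at hl ⊢
  by_cases hp : p = l <;> by_cases hq : q = l
  · exact absurd (hp.trans hq.symm) hpq
  all_goals simp only [hp, hq, if_true, if_false] at hl ⊢; omega

lemma phi_single {R ι : Type*} [CommRing R] [Fintype ι] [DecidableEq ι] (u : ι → R) (i : ι)
    (p : R) : phi u (Pi.single i p) = p * u i := by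
  simp [phi, Pi.single_apply]

def linSyzGraph {σ ι : Type*} (α : ι → σ →₀ ℕ) : SimpleGraph ι where
  Adj a b := a ≠ b ∧ ∃ p q, Finsupp.single p 1 + α a = Finsupp.single q 1 + α b
  symm := ⟨fun _ _ ⟨hab, p, q, h⟩ => ⟨hab.symm, q, p, h.symm⟩⟩
  loopless := ⟨fun _ h => h.1 rfl⟩

lemma X_mul_monomial_eq_iff {R σ : Type*} [CommSemiring R] [Nontrivial R] {p q : σ}
    {s t : σ →₀ ℕ} :
    X p * monomial s (1 : R) = X q * monomial t 1 ↔
      Finsupp.single p 1 + s = Finsupp.single q 1 + t := by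
  simp only [X, monomial_mul, one_mul]
  exact (monomial_left_injective one_ne_zero).eq_iff

section LinearSyzygies

variable {k : Type*} [Field k] {n : ℕ} {ι : Type*} [DecidableEq ι] (α : ι → Fin n →₀ ℕ)

lemma degProj_mem_edgeSpan {w : ι → MvPolynomial (Fin n) k}
    (hw : w ∈ Submodule.span (MvPolynomial (Fin n) k) (linSyz fun i => monomial (α i) (1 : k)))
    (μ : Fin n →₀ ℕ) :
    degProj α μ w ∈ ((linSyzGraph α).induce {x | α x ≤ μ}).edgeSpan k := by
  have hmon : Submodule.span k (Set.range fun β : Fin n →₀ ℕ => monomial β (1 : k)) = ⊤ := by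
    simpa [coe_basisMonomials] using (basisMonomials (Fin n) k).span_eq
  rw [← Submodule.restrictScalars_mem k, ← Submodule.span_smul_of_span_eq_top hmon] at hw
  refine (Submodule.span_le (p := (SimpleGraph.edgeSpan k _).comap (degProj α μ))).mpr ?_ hw
  rintro _ ⟨_, ⟨β, rfl⟩, _, ⟨a, b, p, q, hpq, rfl⟩, rfl⟩
  have E := X_mul_monomial_eq_iff.mp hpq
  simp only [SetLike.mem_coe, Submodule.mem_comap, smul_sub, ← Pi.single_smul', smul_eq_mul,
    X, monomial_mul, one_mul, map_sub, degProj_single_monomial, add_assoc, E]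
  split_ifs with h
  · rcases eq_or_ne a b with rfl | hab
    · simp
    · exact Submodule.subset_span ⟨⟨a, _⟩, ⟨b, _⟩, ⟨hab, p, q, E⟩, rfl⟩
  · simp

variable [Fintype ι]

lemma span_linSyz_le_ker (u : ι → MvPolynomial (Fin n) k) :
    Submodule.span (MvPolynomial (Fin n) k) (linSyz u) ≤ LinearMap.ker (phi u) := by
  rw [Submodule.span_le]
  rintro _ ⟨i, j, a, b, hab, rfl⟩
  rw [SetLike.mem_coe, LinearMap.mem_ker, map_sub, phi_single, phi_single, sub_eq_zero, hab]

lemma degIncl_mem_span_linSyz (hα : Function.Injective α) {μ : Fin n →₀ ℕ}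
    (hG : ((linSyzGraph α).induce {x | α x ≤ μ}).Preconnected) {c : {x | α x ≤ μ} → k}
    (hc : ∑ x, c x = 0) :
    degIncl α μ c ∈
      Submodule.span (MvPolynomial (Fin n) k) (linSyz fun i => monomial (α i) 1) := by
  let K := Submodule.span (MvPolynomial (Fin n) k) (linSyz fun i => monomial (α i) (1 : k))
  refine (Submodule.span_le (p := (K.restrictScalars k).comap (degIncl α μ))).mpr ?_
    (hG.mem_edgeSpan_of_sum_eq_zero hc)
  rintro _ ⟨⟨a, ha⟩, ⟨b, hb⟩, ⟨hab, p, q, E⟩, rfl⟩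
  simp only [Function.Embedding.coe_subtype] at hab E
  have hsup := Finsupp.single_one_add_eq_sup (hα.ne hab) E
  have hle : Finsupp.single p 1 + α a ≤ μ := hsup ▸ sup_le ha hb
  have hshift : ∀ {x : ι} {r : Fin n}, Finsupp.single r 1 + α x = Finsupp.single p 1 + α a →
      μ - (Finsupp.single p 1 + α a) + Finsupp.single r 1 = μ - α x := by
    intro x r h
    rw [← h, add_comm (Finsupp.single r 1), ← tsub_tsub,
      tsub_add_cancel_of_le (le_tsub_of_add_le_right (h.trans_le hle))]
  have key : degIncl α μ (Pi.single ⟨a, ha⟩ 1 - Pi.single ⟨b, hb⟩ 1 : {x | α x ≤ μ} → k) =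
      monomial (μ - (Finsupp.single p 1 + α a)) (1 : k) •
        (Pi.single a (X p) - Pi.single b (X q) : ι → MvPolynomial (Fin n) k) := by
    simp only [map_sub, degIncl_single, smul_sub, ← Pi.single_smul', smul_eq_mul, X, monomial_mul,
      one_mul, hshift rfl, hshift E.symm]
  simp only [SetLike.mem_coe, Submodule.mem_comap, Submodule.restrictScalars_mem, key]
  exact Submodule.smul_mem _ _
    (Submodule.subset_span ⟨a, b, p, q, X_mul_monomial_eq_iff.mpr E, rfl⟩)

lemma reachable_induce_le_sup_of_hasLinRel (hL : HasLinRel fun i => monomial (α i) (1 : k))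
    (i j : ι) :
    ((linSyzGraph α).induce {x | α x ≤ α i ⊔ α j}).Reachable
      ⟨i, show α i ≤ α i ⊔ α j from le_sup_left⟩ ⟨j, show α j ≤ α i ⊔ α j from le_sup_right⟩ := by
  set μ := α i ⊔ α j
  have hi : μ - α i + α i = μ := tsub_add_cancel_of_le le_sup_left
  have hj : μ - α j + α j = μ := tsub_add_cancel_of_le le_sup_right
  have hker : Pi.single i (monomial (μ - α i) 1) - Pi.single j (monomial (μ - α j) 1) ∈
      LinearMap.ker (phi fun i => monomial (α i) (1 : k)) := by
    rw [LinearMap.mem_ker, map_sub, phi_single, phi_single, monomial_mul, monomial_mul, hi, hj,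
      sub_self]
  rw [← hL] at hker
  have h := degProj_mem_edgeSpan α hker μ
  rw [map_sub, degProj_single_monomial, degProj_single_monomial, dif_pos hi, dif_pos hj] at h
  exact SimpleGraph.Reachable.of_single_sub_single_mem_edgeSpan h

theorem hasLinRel_monomial_iff (hα : Function.Injective α) :
    HasLinRel (fun i => monomial (α i) (1 : k)) ↔
      ∀ μ, ((linSyzGraph α).induce {x | α x ≤ μ}).Preconnected := by
  refine ⟨fun hL => (linSyzGraph α).preconnected_induce_le_of_reachable α
    (reachable_induce_le_sup_of_hasLinRel α hL), fun hG => ?_⟩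
  refine le_antisymm (span_linSyz_le_ker _) fun w hw => ?_
  exact mem_of_forall_degIncl_mem
    (P := (Submodule.span _ (linSyz fun i => monomial (α i) (1 : k))).restrictScalars k)
    (fun μ _ hc => degIncl_mem_span_linSyz α hα (hG μ) hc) hw

end LinearSyzygies

lemma Finset.card_inter_add_one_eq_of_subset_insert {γ : Type*} [DecidableEq γ] {A B : Finset γ}
    {p : γ} {d : ℕ} (hAB : A ≠ B) (hA : #A = d) (hB : #B = d) (h : B ⊆ insert p A) :
    #(A ∩ B) + 1 = d := by
  have hunion := card_inter_add_card_union A B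
  have hle : #(A ∪ B) ≤ d + 1 :=
    (card_le_card (union_subset (subset_insert p A) h)).trans (hA ▸ card_insert_le p A)
  have hlt : #A < #(A ∪ B) := by
    refine card_lt_card (ssubset_iff_subset_ne.mpr ⟨subset_union_left, fun hAU => hAB ?_⟩)
    exact (eq_of_subset_of_card_le (union_subset_right hAU.symm.subset) (hA ▸ hB ▸ le_rfl)).symm
  omega

section Squarefree

variable {σ : Type*} [DecidableEq σ]

noncomputable def sqfreeExp (A : Finset σ) : σ →₀ ℕ := Multiset.toFinsupp A.val

lemma sqfreeExp_apply (A : Finset σ) (l : σ) : sqfreeExp A l = if l ∈ A then 1 else 0 := by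
  simp [sqfreeExp, Multiset.toFinsupp_apply, Multiset.count_eq_of_nodup A.nodup]

lemma sqfreeExp_le_sqfreeExp {A B : Finset σ} : sqfreeExp A ≤ sqfreeExp B ↔ A ⊆ B :=
  Finsupp.orderIsoMultiset.symm.le_iff_le.trans val_le_iff

lemma sqfreeExp_injective : Function.Injective (sqfreeExp (σ := σ)) :=
  fun _ _ h => le_antisymm (sqfreeExp_le_sqfreeExp.mp h.le) (sqfreeExp_le_sqfreeExp.mp h.ge)

lemma sqfreeExp_union (A B : Finset σ) : sqfreeExp (A ∪ B) = sqfreeExp A ⊔ sqfreeExp B := by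
  simp [sqfreeExp, union_val, Multiset.toFinsupp_union]

lemma sqfreeExp_insert {A : Finset σ} {p : σ} (hp : p ∉ A) :
    sqfreeExp (insert p A) = Finsupp.single p 1 + sqfreeExp A := by
  rw [sqfreeExp, insert_val_of_notMem hp, ← Multiset.singleton_add, Multiset.toFinsupp_add,
    Multiset.toFinsupp_singleton, sqfreeExp]

lemma prod_X_eq_monomial_sqfreeExp {k : Type*} [CommRing k] (A : Finset σ) :
    ∏ l ∈ A, (X l : MvPolynomial σ k) = monomial (sqfreeExp A) 1 := by
  induction A using Finset.induction with
  | empty => simp [sqfreeExp]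
  | insert p A hp ih => rw [prod_insert hp, ih, sqfreeExp_insert hp, X, monomial_mul, one_mul]

lemma exists_single_add_sqfreeExp_eq_union {A B : Finset σ} (h : #(B \ A) = 1) :
    ∃ p, Finsupp.single p 1 + sqfreeExp A = sqfreeExp (A ∪ B) := by
  obtain ⟨p, hp⟩ := card_eq_one.mp h
  have hpA : p ∉ A := (mem_sdiff.mp (hp ▸ mem_singleton_self p)).2
  refine ⟨p, ?_⟩
  rw [← sqfreeExp_insert hpA, insert_eq, ← hp, sdiff_union_self_eq_union, union_comm]

lemma subset_insert_of_single_add_sqfreeExp_eq {A B : Finset σ} {p q : σ}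
    (h : Finsupp.single p 1 + sqfreeExp A = Finsupp.single q 1 + sqfreeExp B) :
    B ⊆ insert p A := by
  intro l hl
  have hl' := DFunLike.congr_fun h l
  simp only [Finsupp.coe_add, Pi.add_apply, Finsupp.single_apply, sqfreeExp_apply, hl] at hl'
  by_contra hp
  simp only [mem_insert, not_or] at hp
  simp [Ne.symm hp.1, hp.2] at hl'

end Squarefree

lemma syzGraph_eq_linSyzGraph {n m d : ℕ} {F : Fin m → Finset (Fin n)}
    (hinj : Function.Injective F) (hcard : ∀ i, #(F i) = d) :
    syzGraph F d = linSyzGraph (sqfreeExp ∘ F) := by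
  ext a b
  refine and_congr_right fun hab => ⟨fun h => ?_, fun ⟨p, q, E⟩ => ?_⟩
  · have hcard_sdiff : ∀ {i j}, #(F i ∩ F j) + 1 = d → #(F j \ F i) = 1 := fun {i j} hij => by
      have := card_sdiff_add_card_inter (F j) (F i)
      rw [inter_comm, hcard] at this
      omega
    obtain ⟨p, hp⟩ := exists_single_add_sqfreeExp_eq_union (hcard_sdiff h)
    obtain ⟨q, hq⟩ :=
      exists_single_add_sqfreeExp_eq_union (hcard_sdiff (inter_comm (F a) (F b) ▸ h))
    rw [union_comm] at hq
    exact ⟨p, q, hp.trans hq.symm⟩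
  · exact card_inter_add_one_eq_of_subset_insert (hinj.ne hab) (hcard a) (hcard b)
      (subset_insert_of_single_add_sqfreeExp_eq E)

/-- `I` has linear relations iff for all generators `u i, u j` the induced
subgraph `G_I^{(u i, u j)}` (on the generators whose support is contained in
`F i ∪ F j`) is connected. -/
theorem stmt2 {k : Type*} [Field k] {n m d : ℕ}
    (F : Fin m → Finset (Fin n)) (hinj : Function.Injective F)
    (hcard : ∀ i, (F i).card = d) :
    HasLinRel (fun i : Fin m => ∏ l ∈ F i, (X l : MvPolynomial (Fin n) k)) ↔
      ∀ i j : Fin m,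
        ((syzGraph F d).induce {w : Fin m | F w ⊆ F i ∪ F j}).Connected := by
  have hsupp : ∀ i j, {w | F w ⊆ F i ∪ F j} =
      {w | (sqfreeExp ∘ F) w ≤ (sqfreeExp ∘ F) i ⊔ (sqfreeExp ∘ F) j} := fun i j => by
    ext w
    simp [← sqfreeExp_union, sqfreeExp_le_sqfreeExp]
  have hu : (fun i => ∏ l ∈ F i, (X l : MvPolynomial (Fin n) k)) =
      fun i => monomial ((sqfreeExp ∘ F) i) 1 := funext fun i => prod_X_eq_monomial_sqfreeExp (F i)
  rw [hu, hasLinRel_monomial_iff _ (sqfreeExp_injective.comp hinj),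
    ← SimpleGraph.forall_connected_induce_le_sup_iff, syzGraph_eq_linSyzGraph hinj hcard]
  exact forall₂_congr fun i j => by rw [hsupp]
end

section
/- Assume the syzygy graph G_I is a tree. Then I has linear relations if and only if for every subset T ⊆ G(I) on which the induced subgraph of G_I is a path, the ideal ⟨T⟩ generated by T has linear relations. -/
open MvPolynomial Finset

attribute [local instance] Classical.propDecidable

/-- A simple graph is a path graph (a "line") if its vertices can be enumerated
`w 0, w 1, …, w (N-1)` so that adjacency is exactly "consecutive indices". -/
def IsPathGraph {V : Type*} (G : SimpleGraph V) : Prop :=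
  ∃ (N : ℕ) (e : Fin N ≃ V), ∀ a b : Fin N,
    G.Adj (e a) (e b) ↔ (a.val + 1 = b.val ∨ b.val + 1 = a.val)

-- ==== aux starts here ====
noncomputable def Dg {n : ℕ} (s : Finset (Fin n)) : Fin n →₀ ℕ := ∑ l ∈ s, Finsupp.single l 1

lemma Dg_apply {n : ℕ} (s : Finset (Fin n)) (a : Fin n) :
    Dg s a = if a ∈ s then 1 else 0 := by
  classical
  induction s using Finset.induction with
  | empty => simp [Dg]
  | @insert b t hb ih =>
    rw [Dg, Finset.sum_insert hb]
    simp only [Finsupp.add_apply, Finsupp.single_apply]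
    rw [← Dg, ih]
    by_cases hab : b = a <;> by_cases hat : a ∈ t <;> simp_all [eq_comm]

lemma Dg_support {n : ℕ} (s : Finset (Fin n)) : (Dg s).support = s := by
  ext a; simp [Finsupp.mem_support_iff, Dg_apply]

lemma Dg_le_iff {n : ℕ} (s : Finset (Fin n)) (b : Fin n →₀ ℕ) :
    Dg s ≤ b ↔ s ⊆ b.support := by
  rw [Finsupp.le_def]
  constructor
  · intro h a ha
    have := h a
    rw [Dg_apply, if_pos ha] at this
    rw [Finsupp.mem_support_iff]
    omega
  · intro h a
    rw [Dg_apply]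
    by_cases ha : a ∈ s
    · rw [if_pos ha]
      have := h ha
      rw [Finsupp.mem_support_iff] at this
      omega
    · simp [ha]

lemma Dg_insert {n : ℕ} {a : Fin n} {s : Finset (Fin n)} (h : a ∉ s) :
    Dg (insert a s) = Finsupp.single a 1 + Dg s := by
  rw [Dg, Finset.sum_insert h, ← Dg]

lemma prod_X_eq {k : Type*} [Field k] {n : ℕ} (s : Finset (Fin n)) :
    (∏ l ∈ s, (X l : MvPolynomial (Fin n) k)) = monomial (Dg s) 1 := by
  classical
  induction s using Finset.induction with
  | empty => simp [Dg]
  | @insert b t hb ih =>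
    rw [Finset.prod_insert hb, ih, Dg_insert hb, X, monomial_mul, one_mul]


section Aux
variable {k : Type*} [Field k] {n : ℕ} {ι : Type*} [Fintype ι] [DecidableEq ι]

/-- One step of a chain: an edge of the syzygy graph both of whose endpoints have
support inside `A`. -/
def StepRel (F : ι → Finset (Fin n)) (d : ℕ) (A : Finset (Fin n)) (x y : ι) : Prop :=
  F x ⊆ A ∧ F y ⊆ A ∧ x ≠ y ∧ (F x ∩ F y).card + 1 = d

/-- The combinatorial linearity condition. -/
def LCond (F : ι → Finset (Fin n)) (d : ℕ) : Prop :=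
  ∀ A : Finset (Fin n), ∀ i j : ι, F i ⊆ A → F j ⊆ A →
    Relation.ReflTransGen (StepRel F d A) i j

lemma StepRel.symm' {F : ι → Finset (Fin n)} {d : ℕ} {A : Finset (Fin n)} :
    Symmetric (StepRel F d A) := by
  intro x y ⟨h1, h2, h3, h4⟩
  exact ⟨h2, h1, h3.symm, by rwa [Finset.inter_comm]⟩

lemma edge_vars {F : ι → Finset (Fin n)} {d : ℕ} (hcard : ∀ i, (F i).card = d) {p q : ι}
    (hne : p ≠ q) (hc : (F p ∩ F q).card + 1 = d) :
    ∃ a b : Fin n, a ∈ F q ∧ a ∉ F p ∧ b ∈ F p ∧ b ∉ F q ∧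
      insert a (F p) = insert b (F q) := by
  have h1 : (F p \ F q).card = 1 := by
    have := Finset.card_sdiff_add_card_inter (F p) (F q)
    rw [hcard p] at this; omega
  have h2 : (F q \ F p).card = 1 := by
    have := Finset.card_sdiff_add_card_inter (F q) (F p)
    rw [hcard q, Finset.inter_comm] at this; omega
  obtain ⟨b, hb⟩ := Finset.card_eq_one.1 h1
  obtain ⟨a, ha⟩ := Finset.card_eq_one.1 h2
  have hamem : a ∈ F q ∧ a ∉ F p := by
    have : a ∈ F q \ F p := ha ▸ Finset.mem_singleton_self a
    exact ⟨(Finset.mem_sdiff.1 this).1, (Finset.mem_sdiff.1 this).2⟩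
  have hbmem : b ∈ F p ∧ b ∉ F q := by
    have : b ∈ F p \ F q := hb ▸ Finset.mem_singleton_self b
    exact ⟨(Finset.mem_sdiff.1 this).1, (Finset.mem_sdiff.1 this).2⟩
  refine ⟨a, b, hamem.1, hamem.2, hbmem.1, hbmem.2, ?_⟩
  ext x
  simp only [Finset.mem_insert]
  constructor
  · rintro (rfl | hx)
    · exact Or.inr hamem.1
    · by_cases hxq : x ∈ F q
      · exact Or.inr hxq
      · have : x ∈ F p \ F q := Finset.mem_sdiff.2 ⟨hx, hxq⟩
        rw [hb, Finset.mem_singleton] at this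
        exact Or.inl this
  · rintro (rfl | hx)
    · exact Or.inr hbmem.1
    · by_cases hxp : x ∈ F p
      · exact Or.inr hxp
      · have : x ∈ F q \ F p := Finset.mem_sdiff.2 ⟨hx, hxp⟩
        rw [ha, Finset.mem_singleton] at this
        exact Or.inl this

lemma X_mul_monomial_one {a : Fin n} {c : Fin n →₀ ℕ} :
    (X a : MvPolynomial (Fin n) k) * monomial c 1 = monomial (Finsupp.single a 1 + c) 1 := by
  rw [X, monomial_mul, one_mul]

lemma smul_pi_single (f g : MvPolynomial (Fin n) k) (p : ι) :
    f • (Pi.single p g : ι → MvPolynomial (Fin n) k) = Pi.single p (f * g) := by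
  funext j
  by_cases h : j = p <;> simp [Pi.single_apply, h]

lemma edge_mem_span {F : ι → Finset (Fin n)} {d : ℕ} (hcard : ∀ i, (F i).card = d)
    {p q : ι} {b : Fin n →₀ ℕ}
    (hne : p ≠ q) (hc : (F p ∩ F q).card + 1 = d)
    (hp : F p ⊆ b.support) (hq : F q ⊆ b.support) :
    (Pi.single p (monomial (b - Dg (F p)) (1:k)) - Pi.single q (monomial (b - Dg (F q)) 1)) ∈
      Submodule.span (MvPolynomial (Fin n) k)
        (linSyz (fun i => ∏ l ∈ F i, (X l : MvPolynomial (Fin n) k))) := by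
  obtain ⟨a, b', ha1, ha2, hb1, hb2, hins⟩ := edge_vars hcard hne hc
  have hsyz : (Pi.single p (X a) - Pi.single q (X b') : ι → MvPolynomial (Fin n) k) ∈
      linSyz (fun i => ∏ l ∈ F i, (X l : MvPolynomial (Fin n) k)) := by
    refine ⟨p, q, a, b', ?_, rfl⟩
    simp only [prod_X_eq, X_mul_monomial_one]
    rw [← Dg_insert ha2, ← Dg_insert hb2, hins]
  have hle : Dg (insert a (F p)) ≤ b := by
    rw [Dg_le_iff]
    intro x hx
    rcases Finset.mem_insert.1 hx with rfl | hx
    · exact hq ha1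
    · exact hp hx
  have key := Submodule.smul_mem _ (monomial (b - Dg (insert a (F p))) (1:k))
    (Submodule.subset_span hsyz)
  have e1 : Finsupp.single a 1 + (b - Dg (insert a (F p))) = b - Dg (F p) := by
    ext x
    have h1 := Finsupp.le_def.1 hle x
    rw [Dg_insert ha2] at h1 ⊢
    simp only [Finsupp.add_apply, Finsupp.tsub_apply, Finsupp.single_apply] at h1 ⊢
    omega
  have e2 : Finsupp.single b' 1 + (b - Dg (insert a (F p))) = b - Dg (F q) := by
    ext x
    have h1 := Finsupp.le_def.1 hle x
    rw [hins, Dg_insert hb2] at h1 ⊢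
    simp only [Finsupp.add_apply, Finsupp.tsub_apply, Finsupp.single_apply] at h1 ⊢
    omega
  have hsm1 : monomial (b - Dg (insert a (F p))) (1:k) * X a = monomial (b - Dg (F p)) 1 := by
    rw [mul_comm, X_mul_monomial_one, e1]
  have hsm2 : monomial (b - Dg (insert a (F p))) (1:k) * X b' = monomial (b - Dg (F q)) 1 := by
    rw [mul_comm, X_mul_monomial_one, e2]
  rw [smul_sub, smul_pi_single, smul_pi_single, hsm1, hsm2] at key
  exact key

lemma chain_mem_span {F : ι → Finset (Fin n)} {d : ℕ} (hcard : ∀ i, (F i).card = d)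
    {A : Finset (Fin n)} {b : Fin n →₀ ℕ} (hA : A ⊆ b.support) {i j : ι}
    (h : Relation.ReflTransGen (StepRel F d A) i j) :
    (Pi.single i (monomial (b - Dg (F i)) (1:k)) - Pi.single j (monomial (b - Dg (F j)) 1)) ∈
      Submodule.span (MvPolynomial (Fin n) k)
        (linSyz (fun i => ∏ l ∈ F i, (X l : MvPolynomial (Fin n) k))) := by
  induction h with
  | refl => simp
  | tail hic hcj ih =>
    rename_i c j' _
    have step := edge_mem_span (k := k) hcard hcj.2.2.1 hcj.2.2.2
      (hcj.1.trans hA) (hcj.2.1.trans hA)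
    have := Submodule.add_mem _ ih step
    simpa using this

lemma phi_single_s9 (u : ι → MvPolynomial (Fin n) k) (p : ι) (f : MvPolynomial (Fin n) k) :
    phi u (Pi.single p f) = f * u p := by
  simp only [phi, LinearMap.coe_mk, AddHom.coe_mk]
  rw [Finset.sum_eq_single p]
  · simp
  · intro i _ hip
    simp [Pi.single_apply, hip]
  · intro h
    exact absurd (Finset.mem_univ p) h

lemma span_le_ker {F : ι → Finset (Fin n)} :
    Submodule.span (MvPolynomial (Fin n) k)
        (linSyz (fun i => ∏ l ∈ F i, (X l : MvPolynomial (Fin n) k))) ≤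
      LinearMap.ker (phi (fun i => ∏ l ∈ F i, (X l : MvPolynomial (Fin n) k))) := by
  rw [Submodule.span_le]
  rintro w ⟨p, q, a, b', hrel, rfl⟩
  rw [SetLike.mem_coe, LinearMap.mem_ker, map_sub, phi_single_s9, phi_single_s9, hrel, sub_self]

lemma coeff_phi {F : ι → Finset (Fin n)} (w : ι → MvPolynomial (Fin n) k) (b : Fin n →₀ ℕ) :
    coeff b (phi (fun i => ∏ l ∈ F i, (X l : MvPolynomial (Fin n) k)) w) =
      ∑ i : ι, if Dg (F i) ≤ b then coeff (b - Dg (F i)) (w i) else 0 := by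
  simp only [phi, LinearMap.coe_mk, AddHom.coe_mk, prod_X_eq]
  rw [MvPolynomial.coeff_sum]
  refine Finset.sum_congr rfl fun i _ => ?_
  rw [coeff_mul_monomial']
  split <;> simp


lemma syz_cases {F : ι → Finset (Fin n)} (hinj : Function.Injective F) {p q : ι} {a b : Fin n}
    (h : (X a) * (∏ l ∈ F p, (X l : MvPolynomial (Fin n) k)) = X b * ∏ l ∈ F q, X l) :
    (p = q ∧ a = b) ∨
    (p ≠ q ∧ a ∈ F q ∧ a ∉ F p ∧ b ∈ F p ∧ b ∉ F q ∧ insert a (F p) = insert b (F q)) := by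
  rw [prod_X_eq, prod_X_eq, X_mul_monomial_one, X_mul_monomial_one] at h
  have hE : Finsupp.single a 1 + Dg (F p) = Finsupp.single b 1 + Dg (F q) := by
    rcases (monomial_eq_monomial_iff _ _ _ _).1 h with ⟨h1, _⟩ | ⟨h1, _⟩
    · exact h1
    · exact absurd h1 one_ne_zero
  have hval : ∀ x, ((if a = x then 1 else 0) + (if x ∈ F p then 1 else 0) : ℕ)
      = (if b = x then 1 else 0) + (if x ∈ F q then 1 else 0) := by
    intro x
    have := DFunLike.congr_fun hE x
    simpa [Finsupp.add_apply, Finsupp.single_apply, Dg_apply] using this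
  by_cases hab : a = b
  · subst hab
    left
    refine ⟨hinj ?_, rfl⟩
    have hDg : Dg (F p) = Dg (F q) := by
      have := add_left_cancel hE
      exact this
    have : (Dg (F p)).support = (Dg (F q)).support := by rw [hDg]
    rwa [Dg_support, Dg_support] at this
  · right
    have h1 := hval a
    rw [if_pos rfl, if_neg (show ¬ b = a from fun hh => hab hh.symm)] at h1
    have ha : a ∉ F p ∧ a ∈ F q := by
      by_cases m1 : a ∈ F p <;> by_cases m2 : a ∈ F q <;>
        simp only [m1, m2, if_true, if_false] at h1 <;>
        first | exact ⟨m1, m2⟩ | omega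
    have h2 := hval b
    rw [if_pos rfl, if_neg (show ¬ a = b from hab)] at h2
    have hb : b ∈ F p ∧ b ∉ F q := by
      by_cases m1 : b ∈ F p <;> by_cases m2 : b ∈ F q <;>
        simp only [m1, m2, if_true, if_false] at h2 <;>
        first | exact ⟨m1, m2⟩ | omega
    have hne : p ≠ q := by
      rintro rfl
      exact ha.1 ha.2
    refine ⟨hne, ha.2, ha.1, hb.1, hb.2, ?_⟩
    have : Dg (insert a (F p)) = Dg (insert b (F q)) := by
      rw [Dg_insert ha.1, Dg_insert hb.2, hE]
    have h3 : (Dg (insert a (F p))).support = (Dg (insert b (F q))).support := by rw [this]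
    rwa [Dg_support, Dg_support] at h3

lemma edge_card_of_syz {F : ι → Finset (Fin n)} {d : ℕ} (hcard : ∀ i, (F i).card = d)
    {p q : ι} {a b : Fin n} (ha2 : a ∉ F p) (hb1 : b ∈ F p) (hb2 : b ∉ F q)
    (hins : insert a (F p) = insert b (F q)) :
    (F p ∩ F q).card + 1 = d := by
  have hpq : F p ∩ F q = (F p).erase b := by
    ext x
    simp only [Finset.mem_inter, Finset.mem_erase]
    constructor
    · rintro ⟨hx1, hx2⟩
      exact ⟨fun hh => hb2 (hh ▸ hx2), hx1⟩
    · rintro ⟨hx1, hx2⟩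
      refine ⟨hx2, ?_⟩
      have : x ∈ insert b (F q) := by
        rw [← hins]; exact Finset.mem_insert_of_mem hx2
      rcases Finset.mem_insert.1 this with rfl | hx
      · exact absurd rfl hx1
      · exact hx
  have hd1 : 1 ≤ d := by
    rw [← hcard p]
    exact Finset.card_pos.2 ⟨b, hb1⟩
  rw [hpq, Finset.card_erase_of_mem hb1, hcard p]
  omega

lemma hasLinRel_to_LCond {F : ι → Finset (Fin n)} {d : ℕ}
    (hinj : Function.Injective F) (hcard : ∀ i, (F i).card = d)
    (h : HasLinRel (fun i => ∏ l ∈ F i, (X l : MvPolynomial (Fin n) k))) :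
    LCond F d := by
  intro A i j hi hj
  set u : ι → MvPolynomial (Fin n) k := fun i => ∏ l ∈ F i, (X l : MvPolynomial (Fin n) k)
    with hu
  set Rch : ι → Prop := fun p => Relation.ReflTransGen (StepRel F d A) i p with hRch
  have hFR : ∀ p, Rch p → F p ⊆ A := by
    intro p hp
    rcases Relation.ReflTransGen.cases_tail hp with rfl | ⟨c, _, hc⟩
    · exact hi
    · exact hc.2.1
  set θ : (ι → MvPolynomial (Fin n) k) → k :=
    fun w => ∑ p ∈ Finset.univ.filter (fun p => Rch p), coeff (Dg A - Dg (F p)) (w p) with hθ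
  have hθadd : ∀ w1 w2, θ (w1 + w2) = θ w1 + θ w2 := by
    intro w1 w2
    simp only [hθ, Pi.add_apply, MvPolynomial.coeff_add, Finset.sum_add_distrib]
  have hθsingle : ∀ (p : ι) (f : MvPolynomial (Fin n) k),
      θ (Pi.single p f) = if Rch p then coeff (Dg A - Dg (F p)) f else 0 := by
    intro p f
    simp only [hθ]
    have : ∀ r ∈ Finset.univ.filter (fun p => Rch p),
        coeff (Dg A - Dg (F r)) ((Pi.single p f : ι → MvPolynomial (Fin n) k) r) =
        if r = p then coeff (Dg A - Dg (F p)) f else 0 := by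
      intro r _
      rcases eq_or_ne r p with rfl | hrp
      · simp
      · simp [Pi.single_apply, hrp]
    rw [Finset.sum_congr rfl this, Finset.sum_ite_eq']
    simp
  have hθsmulsingle : ∀ (g : MvPolynomial (Fin n) k) (p : ι) (f : MvPolynomial (Fin n) k),
      θ (g • (Pi.single p f : ι → MvPolynomial (Fin n) k))
        = if Rch p then coeff (Dg A - Dg (F p)) (g * f) else 0 := by
    intro g p f
    rw [smul_pi_single, hθsingle]
  have hθsyz : ∀ (g : MvPolynomial (Fin n) k) (s : ι → MvPolynomial (Fin n) k),
      s ∈ linSyz u → θ (g • s) = 0 := by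
    rintro g s ⟨p, q, a, b', hrel, rfl⟩
    have hsub : g • (Pi.single p (X a) - Pi.single q (X b') : ι → MvPolynomial (Fin n) k)
        = g • (Pi.single p (X a) : ι → MvPolynomial (Fin n) k)
          + (-g) • (Pi.single q (X b') : ι → MvPolynomial (Fin n) k) := by
      rw [smul_sub, neg_smul, sub_eq_add_neg]
    rw [hsub, hθadd, hθsmulsingle, hθsmulsingle]
    rcases syz_cases (k := k) hinj hrel with ⟨rfl, rfl⟩ | ⟨hne, ha1, ha2, hb1, hb2, hins⟩
    · by_cases hp : Rch p <;> simp [hp, neg_mul, MvPolynomial.coeff_neg]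
    · have hadj : (F p ∩ F q).card + 1 = d := edge_card_of_syz hcard ha2 hb1 hb2 hins
      by_cases hp : Rch p <;> by_cases hq : Rch q
      · rw [if_pos hp, if_pos hq]
        have e1 : coeff (Dg A - Dg (F p)) (g * X a)
            = coeff (Dg A - Dg (insert a (F p))) g := by
          rw [coeff_mul_X']
          have hmem : a ∈ (Dg A - Dg (F p)).support := by
            rw [Finsupp.mem_support_iff, Finsupp.tsub_apply, Dg_apply, Dg_apply,
              if_pos (hFR q hq ha1), if_neg ha2]
            omega
          rw [if_pos hmem, tsub_tsub]
          congr 2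
          rw [Dg_insert ha2]
          abel
        have e2 : coeff (Dg A - Dg (F q)) ((-g) * X b')
            = -coeff (Dg A - Dg (insert a (F p))) g := by
          rw [neg_mul, MvPolynomial.coeff_neg, coeff_mul_X']
          have hmem : b' ∈ (Dg A - Dg (F q)).support := by
            rw [Finsupp.mem_support_iff, Finsupp.tsub_apply, Dg_apply, Dg_apply,
              if_pos (hFR p hp hb1), if_neg hb2]
            omega
          rw [if_pos hmem, tsub_tsub]
          congr 3
          rw [hins, Dg_insert hb2]
          abel
        rw [e1, e2]
        ring
      · rw [if_pos hp, if_neg hq]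
        have haA : a ∉ A := by
          intro haA
          apply hq
          refine hp.tail ⟨hFR p hp, ?_, hne, hadj⟩
          intro x hx
          have : x ∈ insert a (F p) := by
            rw [hins]; exact Finset.mem_insert_of_mem hx
          rcases Finset.mem_insert.1 this with rfl | hx'
          · exact haA
          · exact hFR p hp hx'
        rw [coeff_mul_X']
        have hmem : a ∉ (Dg A - Dg (F p)).support := by
          rw [Finsupp.mem_support_iff, Finsupp.tsub_apply, Dg_apply, Dg_apply,
            if_neg haA, if_neg ha2]
          omega
        rw [if_neg hmem]
        ring
      · rw [if_neg hp, if_pos hq]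
        have hbA : b' ∉ A := by
          intro hbA
          apply hp
          refine hq.tail ⟨hFR q hq, ?_, hne.symm, by rwa [Finset.inter_comm]⟩
          intro x hx
          have : x ∈ insert b' (F q) := by
            rw [← hins]; exact Finset.mem_insert_of_mem hx
          rcases Finset.mem_insert.1 this with rfl | hx'
          · exact hbA
          · exact hFR q hq hx'
        rw [neg_mul, MvPolynomial.coeff_neg, coeff_mul_X']
        have hmem : b' ∉ (Dg A - Dg (F q)).support := by
          rw [Finsupp.mem_support_iff, Finsupp.tsub_apply, Dg_apply, Dg_apply,
            if_neg hbA, if_neg hb2]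
          omega
        rw [if_neg hmem]
        ring
      · rw [if_neg hp, if_neg hq]; ring
  have hθspan : ∀ w ∈ Submodule.span (MvPolynomial (Fin n) k) (linSyz u), θ w = 0 := by
    intro w hw
    have key : ∀ (g : MvPolynomial (Fin n) k), θ (g • w) = 0 := by
      induction hw using Submodule.span_induction with
      | mem x hx => exact fun g => hθsyz g x hx
      | zero => intro g; simp only [smul_zero]; simp [hθ]
      | add x y hx hy ihx ihy =>
        intro g
        rw [smul_add, hθadd, ihx g, ihy g, add_zero]
      | smul a x hx ihx =>
        intro g
        rw [smul_smul]
        exact ihx (g * a)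
    have := key 1
    rwa [one_smul] at this
  -- the element v_i - v_j
  have hDi : Dg (F i) ≤ Dg A := (Dg_le_iff _ _).2 (by rw [Dg_support]; exact hi)
  have hDj : Dg (F j) ≤ Dg A := (Dg_le_iff _ _).2 (by rw [Dg_support]; exact hj)
  have hker : (Pi.single i (monomial (Dg A - Dg (F i)) (1:k))
      - Pi.single j (monomial (Dg A - Dg (F j)) 1)) ∈ LinearMap.ker (phi u) := by
    rw [LinearMap.mem_ker, map_sub, phi_single_s9, phi_single_s9, hu]
    simp only [prod_X_eq]
    rw [monomial_mul, monomial_mul, one_mul, tsub_add_cancel_of_le hDi,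
      tsub_add_cancel_of_le hDj, sub_self]
  rw [HasLinRel] at h
  rw [← h] at hker
  have h0 := hθspan _ hker
  have hsub : θ (Pi.single i (monomial (Dg A - Dg (F i)) (1:k))
      - Pi.single j (monomial (Dg A - Dg (F j)) 1))
      = θ (Pi.single i (monomial (Dg A - Dg (F i)) (1:k)))
        - θ (Pi.single j (monomial (Dg A - Dg (F j)) 1)) := by
    have := hθadd (Pi.single i (monomial (Dg A - Dg (F i)) (1:k))
      - Pi.single j (monomial (Dg A - Dg (F j)) 1))
      (Pi.single j (monomial (Dg A - Dg (F j)) 1))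
    rw [sub_add_cancel] at this
    rw [this]
    ring
  rw [hsub, hθsingle, hθsingle] at h0
  rw [if_pos (Relation.ReflTransGen.refl)] at h0
  rw [MvPolynomial.coeff_monomial, if_pos rfl] at h0
  by_contra hnj
  rw [if_neg hnj] at h0
  simp at h0


lemma support_sub_monomial (p : MvPolynomial (Fin n) k) (c : Fin n →₀ ℕ) :
    (p - monomial c (coeff c p)).support = p.support.erase c := by
  ext x
  simp only [MvPolynomial.mem_support_iff, coeff_sub, coeff_monomial, Finset.mem_erase]
  rcases eq_or_ne c x with rfl | hcx
  · simp
  · simp [hcx, Ne.symm hcx]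

lemma ker_le_span {F : ι → Finset (Fin n)} {d : ℕ} (hcard : ∀ i, (F i).card = d)
    (hLC : LCond F d) :
    LinearMap.ker (phi (fun i => ∏ l ∈ F i, (X l : MvPolynomial (Fin n) k))) ≤
      Submodule.span (MvPolynomial (Fin n) k)
        (linSyz (fun i => ∏ l ∈ F i, (X l : MvPolynomial (Fin n) k))) := by
  intro w hw
  suffices H : ∀ (N : ℕ) (w : ι → MvPolynomial (Fin n) k),
      (∑ i : ι, (w i).support.card) ≤ N →
      w ∈ LinearMap.ker (phi (fun i => ∏ l ∈ F i, (X l : MvPolynomial (Fin n) k))) →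
      w ∈ Submodule.span (MvPolynomial (Fin n) k)
        (linSyz (fun i => ∏ l ∈ F i, (X l : MvPolynomial (Fin n) k))) by
    exact H _ w le_rfl hw
  intro N
  induction N with
  | zero =>
    intro w hN hker
    have : w = 0 := by
      funext r
      have h1 : (w r).support.card = 0 := by
        have h2 : (w r).support.card ≤ ∑ i : ι, (w i).support.card :=
          Finset.single_le_sum (f := fun i => (w i).support.card)
            (fun i _ => Nat.zero_le _) (Finset.mem_univ r)
        omega
      rw [Finset.card_eq_zero] at h1
      exact MvPolynomial.support_eq_empty.1 h1
    rw [this]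
    exact Submodule.zero_mem _
  | succ N ih =>
    intro w hN hker
    by_cases hw0 : w = 0
    · rw [hw0]; exact Submodule.zero_mem _
    obtain ⟨i0, hi0⟩ := Function.ne_iff.1 hw0
    obtain ⟨a0, ha0⟩ := Finset.nonempty_iff_ne_empty.2
      (fun hh => hi0 (MvPolynomial.support_eq_empty.1 hh))
    set b : Fin n →₀ ℕ := a0 + Dg (F i0) with hb
    have hi0b : Dg (F i0) ≤ b := le_add_self
    set lam : ι → k := fun r => coeff (b - Dg (F r)) (w r) with hlam
    set filt : Finset ι := Finset.univ.filter (fun r => Dg (F r) ≤ b) with hfilt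
    have hi0filt : i0 ∈ filt := Finset.mem_filter.2 ⟨Finset.mem_univ _, hi0b⟩
    have hsum : ∑ r ∈ filt, lam r = 0 := by
      have h1 : coeff b (phi (fun i => ∏ l ∈ F i, (X l : MvPolynomial (Fin n) k)) w) = 0 := by
        rw [LinearMap.mem_ker.1 hker, MvPolynomial.coeff_zero]
      rw [coeff_phi] at h1
      rw [← h1, hfilt, Finset.sum_filter]
    set vi : ι → (ι → MvPolynomial (Fin n) k) :=
      fun r => Pi.single r (monomial (b - Dg (F r)) (1:k)) with hvi
    set wb : ι → MvPolynomial (Fin n) k :=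
      ∑ r ∈ filt, (C (lam r) : MvPolynomial (Fin n) k) • (vi r - vi i0) with hwb
    have hwb_span : wb ∈ Submodule.span (MvPolynomial (Fin n) k)
        (linSyz (fun i => ∏ l ∈ F i, (X l : MvPolynomial (Fin n) k))) := by
      refine Submodule.sum_mem _ fun r hr => Submodule.smul_mem _ _ ?_
      have hr' : Dg (F r) ≤ b := (Finset.mem_filter.1 hr).2
      refine chain_mem_span hcard subset_rfl
        (hLC b.support r i0 ?_ ?_)
      · rw [← Dg_le_iff]; exact hr'
      · rw [← Dg_le_iff]; exact hi0b
    have hwb_eq : ∀ r, wb r = if Dg (F r) ≤ b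
        then monomial (b - Dg (F r)) (lam r) else 0 := by
      intro r
      rw [hwb]
      rw [Finset.sum_apply]
      have expand : ∀ s ∈ filt, ((C (lam s) : MvPolynomial (Fin n) k) • (vi s - vi i0)) r
          = (if r = s then (C (lam s) : MvPolynomial (Fin n) k) * monomial (b - Dg (F s)) 1 else 0)
            - (C (lam s) : MvPolynomial (Fin n) k) * vi i0 r := by
        intro s _
        simp only [Pi.smul_apply, Pi.sub_apply, smul_eq_mul, mul_sub, hvi, Pi.single_apply]
        rw [mul_ite, mul_zero]
      rw [Finset.sum_congr rfl expand, Finset.sum_sub_distrib, Finset.sum_ite_eq,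
        ← Finset.sum_mul, ← map_sum, hsum, map_zero, zero_mul, sub_zero]
      simp only [hfilt, Finset.mem_filter, Finset.mem_univ, true_and]
      split
      · rw [C_mul_monomial, mul_one]
      · rfl
    have hwbker : wb ∈ LinearMap.ker (phi (fun i => ∏ l ∈ F i, (X l : MvPolynomial (Fin n) k))) :=
      span_le_ker hwb_span
    have hrest : w - wb ∈ LinearMap.ker
        (phi (fun i => ∏ l ∈ F i, (X l : MvPolynomial (Fin n) k))) :=
      Submodule.sub_mem _ hker hwbker
    have hle : ∀ r, ((w - wb) r).support.card ≤ (w r).support.card := by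
      intro r
      rw [Pi.sub_apply, hwb_eq r]
      split
      · rw [support_sub_monomial (w r) (b - Dg (F r))]
        exact Finset.card_erase_le
      · rw [sub_zero]
    have hlt : ((w - wb) i0).support.card < (w i0).support.card := by
      rw [Pi.sub_apply, hwb_eq i0, if_pos hi0b]
      have hc : b - Dg (F i0) = a0 := by rw [hb, add_tsub_cancel_right]
      rw [hc]
      rw [hlam]
      simp only [hc]
      rw [support_sub_monomial (w i0) a0]
      rw [Finset.card_erase_of_mem ha0]
      have : 0 < (w i0).support.card := Finset.card_pos.2 ⟨a0, ha0⟩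
      omega
    have htot : (∑ i : ι, ((w - wb) i).support.card) < ∑ i : ι, (w i).support.card :=
      Finset.sum_lt_sum (fun i _ => hle i) ⟨i0, Finset.mem_univ _, hlt⟩
    have hrec := ih (w - wb) (by omega) hrest
    have : w = (w - wb) + wb := by rw [sub_add_cancel]
    rw [this]
    exact Submodule.add_mem _ hrec hwb_span

theorem lemmaA {F : ι → Finset (Fin n)} {d : ℕ}
    (hinj : Function.Injective F) (hcard : ∀ i, (F i).card = d) :
    HasLinRel (fun i => ∏ l ∈ F i, (X l : MvPolynomial (Fin n) k)) ↔ LCond F d := by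
  constructor
  · exact hasLinRel_to_LCond hinj hcard
  · intro hLC
    exact le_antisymm span_le_ker (ker_le_span hcard hLC)

end Aux

section Graph
variable {V : Type*}

lemma support_get_getVert {G : SimpleGraph V} {u v : V} (p : G.Walk u v) :
    ∀ (r : ℕ) (hr : r < p.support.length), p.support.get ⟨r, hr⟩ = p.getVert r := by
  induction p with
  | nil =>
    intro r hr
    rw [SimpleGraph.Walk.support_nil, List.length_singleton] at hr
    have : r = 0 := by omega
    subst this
    rfl
  | cons h q ih =>
    intro r hr
    match r with
    | 0 => rfl
    | r + 1 =>
      have hstep : (SimpleGraph.Walk.cons h q).support.get ⟨r+1, hr⟩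
          = q.support.get ⟨r, by simpa [SimpleGraph.Walk.support_cons] using hr⟩ := rfl
      rw [hstep, SimpleGraph.Walk.getVert_cons_succ]
      exact ih r _

lemma mem_edges_getVert {G : SimpleGraph V} {u v : V} (p : G.Walk u v) {e : Sym2 V}
    (he : e ∈ p.edges) : ∃ c, c < p.length ∧ e = s(p.getVert c, p.getVert (c+1)) := by
  induction p with
  | nil => simp at he
  | cons h q ih =>
    rw [SimpleGraph.Walk.edges_cons, List.mem_cons] at he
    rcases he with rfl | he
    · exact ⟨0, by simp [SimpleGraph.Walk.getVert_cons_succ], by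
        simp [SimpleGraph.Walk.getVert_cons_succ]⟩
    · obtain ⟨c, hc, hce⟩ := ih he
      refine ⟨c + 1, by simp; omega, ?_⟩
      rw [SimpleGraph.Walk.getVert_cons_succ, SimpleGraph.Walk.getVert_cons_succ]
      exact hce

lemma adj_mem_edges {G : SimpleGraph V} [DecidableEq V] (hac : G.IsAcyclic) {i j : V}
    (P : G.Walk i j) (hP : P.IsPath) {x y : V} (hx : x ∈ P.support) (hy : y ∈ P.support)
    (hxy : G.Adj x y) : s(x, y) ∈ P.edges := by
  obtain ⟨Q, R, rfl⟩ := SimpleGraph.Walk.mem_support_iff_exists_append.1 hy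
  rw [SimpleGraph.Walk.support_append, List.mem_append] at hx
  rw [SimpleGraph.Walk.edges_append, List.mem_append]
  rcases hx with hxQ | hxR
  · left
    have hQp : Q.IsPath := hP.of_append_left
    set W := Q.dropUntil x hxQ with hW
    have hWp : W.IsPath := hQp.dropUntil hxQ
    have hu := hac.path_unique ⟨W, hWp⟩ (SimpleGraph.Path.singleton hxy)
    have hval : W = (SimpleGraph.Path.singleton hxy).val := by
      rw [← hu]
    have hmem : s(x, y) ∈ W.edges := by
      rw [hval]
      simp [SimpleGraph.Path.singleton]
    exact SimpleGraph.Walk.edges_dropUntil_subset _ _ hmem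
  · right
    have hxR' : x ∈ R.support := List.mem_of_mem_tail hxR
    have hRp : R.IsPath := hP.of_append_right
    set W := R.takeUntil x hxR' with hW
    have hWp : W.reverse.IsPath := (hRp.takeUntil hxR').reverse
    have hu := hac.path_unique ⟨W.reverse, hWp⟩ (SimpleGraph.Path.singleton hxy)
    have hval : W.reverse = (SimpleGraph.Path.singleton hxy).val := by
      rw [← hu]
    have hmem : s(x, y) ∈ W.reverse.edges := by
      rw [hval]
      simp [SimpleGraph.Path.singleton]
    rw [SimpleGraph.Walk.edges_reverse, List.mem_reverse] at hmem
    exact SimpleGraph.Walk.edges_takeUntil_subset _ _ hmem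

lemma isPathGraph_of_acyclic_path {G : SimpleGraph V} [DecidableEq V] (hac : G.IsAcyclic)
    {i j : V} (P : G.Walk i j) (hP : P.IsPath) (s : Set V)
    (hs : ∀ x, x ∈ s ↔ x ∈ P.support) :
    IsPathGraph (G.induce s) := by
  classical
  have hnd := hP.support_nodup
  refine ⟨P.support.length, ?_, ?_⟩
  · refine Equiv.ofBijective (fun r => (⟨P.support.get r, (hs _).2 (P.support.get_mem _)⟩ : s)) ⟨?_, ?_⟩
    · intro r1 r2 h12
      have := congrArg Subtype.val h12
      exact (hnd.get_inj_iff).1 this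
    · rintro ⟨x, hxs⟩
      obtain ⟨r, hr⟩ := List.mem_iff_get.1 ((hs x).1 hxs)
      exact ⟨r, Subtype.ext hr⟩
  · intro a b
    simp only [Equiv.ofBijective_apply, SimpleGraph.comap_adj, Function.Embedding.coe_subtype]
    constructor
    · intro hadj
      have hedge : s(P.support.get a, P.support.get b) ∈ P.edges :=
        adj_mem_edges hac P hP (P.support.get_mem _) (P.support.get_mem _) hadj
      obtain ⟨c, hc, hce⟩ := mem_edges_getVert P hedge
      have hlen : P.support.length = P.length + 1 := SimpleGraph.Walk.length_support P
      have hc1 : c < P.support.length := by omega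
      have hc2 : c + 1 < P.support.length := by omega
      rw [← support_get_getVert P c hc1, ← support_get_getVert P (c+1) hc2] at hce
      rcases Sym2.eq_iff.1 hce with ⟨h1, h2⟩ | ⟨h1, h2⟩
      · have e1 : a = ⟨c, hc1⟩ := (hnd.get_inj_iff).1 h1
        have e2 : b = ⟨c+1, hc2⟩ := (hnd.get_inj_iff).1 h2
        have e1' : a.val = c := congrArg Fin.val e1
        have e2' : b.val = c + 1 := congrArg Fin.val e2
        omega
      · have e1 : a = ⟨c+1, hc2⟩ := (hnd.get_inj_iff).1 h1
        have e2 : b = ⟨c, hc1⟩ := (hnd.get_inj_iff).1 h2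
        have e1' : a.val = c + 1 := congrArg Fin.val e1
        have e2' : b.val = c := congrArg Fin.val e2
        omega
    · intro hab
      have hlen : P.support.length = P.length + 1 := SimpleGraph.Walk.length_support P
      rcases hab with hab | hab
      · have hcl : a.val < P.length := by have := b.isLt; omega
        have hadj := P.adj_getVert_succ hcl
        have h1 : P.support.get a = P.getVert a.val := support_get_getVert P a.val a.isLt
        have h2 : P.support.get b = P.getVert (a.val + 1) := by
          have hb : b = ⟨a.val + 1, by omega⟩ := Fin.ext (show b.val = a.val + 1 by omega)
          rw [hb]
          exact support_get_getVert P (a.val + 1) (by omega)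
        show G.Adj (P.support.get a) (P.support.get b)
        rw [h1, h2]
        exact hadj
      · have hcl : b.val < P.length := by have := a.isLt; omega
        have hadj := (P.adj_getVert_succ hcl).symm
        have h2 : P.support.get b = P.getVert b.val := support_get_getVert P b.val b.isLt
        have h1 : P.support.get a = P.getVert (b.val + 1) := by
          have ha : a = ⟨b.val + 1, by omega⟩ := Fin.ext (show a.val = b.val + 1 by omega)
          rw [ha]
          exact support_get_getVert P (b.val + 1) (by omega)
        show G.Adj (P.support.get a) (P.support.get b)
        rw [h1, h2]
        exact hadj

lemma IsPathGraph.preconnected {G : SimpleGraph V} (h : IsPathGraph G) : G.Preconnected := by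
  obtain ⟨N, e, he⟩ := h
  have H : ∀ (c : ℕ) (a b : Fin N), b.val - a.val ≤ c → a.val ≤ b.val →
      G.Reachable (e a) (e b) := by
    intro c
    induction c with
    | zero =>
      intro a b h1 h2
      have : a = b := Fin.ext (by omega)
      subst this
      exact SimpleGraph.Reachable.refl _
    | succ c ih =>
      intro a b h1 h2
      rcases eq_or_ne a b with rfl | hab
      · exact SimpleGraph.Reachable.refl _
      · have hlt : a.val < b.val := by
          rcases Nat.lt_or_ge a.val b.val with h | h
          · exact h
          · exact absurd (Fin.ext (by omega) : a = b) hab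
        have ha' : a.val + 1 < N := by have := b.isLt; omega
        have hadj : G.Adj (e a) (e ⟨a.val + 1, ha'⟩) := (he _ _).2 (Or.inl rfl)
        exact hadj.reachable.trans (ih ⟨a.val + 1, ha'⟩ b (by simp only []; omega) (by simp only []; omega))
  intro x y
  rcases Nat.le_total (e.symm x).val (e.symm y).val with hle | hle
  · have := H _ (e.symm x) (e.symm y) le_rfl hle
    simpa using this
  · have := H _ (e.symm y) (e.symm x) le_rfl hle
    exact (by simpa using this : G.Reachable y x).symm

end Graph


section Bridge
variable {n m d : ℕ}

lemma syzGraph_adj (F : Fin m → Finset (Fin n)) (d : ℕ) (i j : Fin m) :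
    (syzGraph F d).Adj i j ↔ i ≠ j ∧ (F i ∩ F j).card + 1 = d := Iff.rfl

lemma chain_to_walk {F : Fin m → Finset (Fin n)} {A : Finset (Fin n)} {i j : Fin m}
    (hchain : Relation.ReflTransGen (StepRel F d A) i j) (hi : F i ⊆ A) :
    ∃ p : (syzGraph F d).Walk i j, ∀ x ∈ p.support, F x ⊆ A := by
  induction hchain with
  | refl =>
    refine ⟨SimpleGraph.Walk.nil, ?_⟩
    intro x hx
    rw [SimpleGraph.Walk.support_nil, List.mem_singleton] at hx
    rwa [hx]
  | tail hic hcj ih =>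
    obtain ⟨p, hp⟩ := ih
    refine ⟨p.concat ((syzGraph_adj F d _ _).2 ⟨hcj.2.2.1, hcj.2.2.2⟩), ?_⟩
    intro x hx
    rw [SimpleGraph.Walk.support_concat, List.mem_append,
      List.mem_singleton] at hx
    rcases hx with hx | rfl
    · exact hp x hx
    · exact hcj.2.1

lemma walk_to_chain_subtype {F : Fin m → Finset (Fin n)} {A : Finset (Fin n)}
    {T : Set (Fin m)} :
    ∀ {i j : Fin m} (p : (syzGraph F d).Walk i j)
      (hT : ∀ x ∈ p.support, x ∈ T) (hA : ∀ x ∈ p.support, F x ⊆ A),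
    Relation.ReflTransGen (StepRel (fun x : T => F x.val) d A)
      ⟨i, hT i p.start_mem_support⟩ ⟨j, hT j p.end_mem_support⟩ := by
  intro i j p
  induction p with
  | nil =>
    intro hT hA
    exact Relation.ReflTransGen.refl
  | cons h q ih =>
    intro hT hA
    rename_i a b c
    have hbmem : b ∈ (SimpleGraph.Walk.cons h q).support := by
      rw [SimpleGraph.Walk.support_cons]
      exact List.mem_cons_of_mem _ q.start_mem_support
    have hTq : ∀ x ∈ q.support, x ∈ T := by
      intro x hx
      refine hT x ?_
      rw [SimpleGraph.Walk.support_cons]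
      exact List.mem_cons_of_mem _ hx
    have hAq : ∀ x ∈ q.support, F x ⊆ A := by
      intro x hx
      refine hA x ?_
      rw [SimpleGraph.Walk.support_cons]
      exact List.mem_cons_of_mem _ hx
    refine Relation.ReflTransGen.head
      (⟨hA a ((SimpleGraph.Walk.cons h q).start_mem_support), hA b hbmem,
        fun hh => h.1 (congrArg Subtype.val hh), h.2⟩ :
        StepRel (fun x : T => F x.val) d A ⟨a, _⟩ ⟨b, hT b hbmem⟩) ?_
    exact ih hTq hAq

end Bridge


/-- Suppose `G_I` is a tree. Then `I` has linear relations iff for every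
subset `T` of the generators on which the induced subgraph of `G_I` is a path, the ideal
generated by `T` has linear relations. -/
theorem stmt9 {k : Type*} [Field k] {n m d : ℕ}
    (F : Fin m → Finset (Fin n)) (hinj : Function.Injective F)
    (hcard : ∀ i, (F i).card = d)
    (htree : (syzGraph F d).IsTree) :
    HasLinRel (fun i : Fin m => ∏ l ∈ F i, (X l : MvPolynomial (Fin n) k)) ↔
      ∀ T : Finset (Fin m),
        IsPathGraph ((syzGraph F d).induce (T : Set (Fin m))) →
        HasLinRel (fun i : (T : Set (Fin m)) =>
          ∏ l ∈ F i.val, (X l : MvPolynomial (Fin n) k)) := by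
  classical
  constructor
  · -- forward
    intro h T hPG
    have hLC : LCond F d := (lemmaA (k := k) hinj hcard).1 h
    have hinj' : Function.Injective (fun x : (T : Set (Fin m)) => F x.val) :=
      fun x y hxy => Subtype.ext (hinj hxy)
    have hcard' : ∀ x : (T : Set (Fin m)), (F x.val).card = d := fun x => hcard _
    refine (lemmaA (k := k) hinj' hcard').2 ?_
    intro A x y hFx hFy
    -- ambient chain inside A
    obtain ⟨W2, hW2⟩ := chain_to_walk (hLC A x.val y.val hFx hFy) hFx
    -- walk inside T from the path graph structure
    obtain ⟨w⟩ := hPG.preconnected x y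
    have hW1 := w.map (SimpleGraph.Embedding.induce (T : Set (Fin m))).toHom
    set W1 : (syzGraph F d).Walk x.val y.val :=
      w.map (SimpleGraph.Embedding.induce (T : Set (Fin m))).toHom with hW1def
    have hW1T : ∀ z ∈ W1.support, z ∈ (T : Set (Fin m)) := by
      intro z hz
      replace hz : z ∈ (w.map (SimpleGraph.Embedding.induce (T : Set (Fin m))).toHom).support := hz
      rw [SimpleGraph.Walk.support_map, List.mem_map] at hz
      obtain ⟨z', _, rfl⟩ := hz
      exact z'.2
    set P1 := W1.bypass with hP1def
    set P2 := W2.bypass with hP2def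
    have hP1 : P1.IsPath := W1.bypass_isPath
    have hP2 : P2.IsPath := W2.bypass_isPath
    have hEq : P1 = P2 := by
      have := htree.IsAcyclic.path_unique ⟨P1, hP1⟩ ⟨P2, hP2⟩
      exact congrArg Subtype.val this
    have hT1 : ∀ z ∈ P1.support, z ∈ (T : Set (Fin m)) :=
      fun z hz => hW1T z (W1.support_bypass_subset hz)
    have hA1 : ∀ z ∈ P1.support, F z ⊆ A := by
      intro z hz
      rw [hEq] at hz
      exact hW2 z (W2.support_bypass_subset hz)
    exact walk_to_chain_subtype P1 hT1 hA1
  · -- backward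
    intro hyp
    refine (lemmaA (k := k) hinj hcard).2 ?_
    intro A i j hFi hFj
    obtain ⟨w0⟩ := htree.isConnected.preconnected i j
    set P := w0.bypass with hPdef
    have hP : P.IsPath := w0.bypass_isPath
    set T : Finset (Fin m) := P.support.toFinset with hTdef
    have hsets : ∀ x, x ∈ (T : Set (Fin m)) ↔ x ∈ P.support := by
      intro x
      simp [hTdef]
    have hPG : IsPathGraph ((syzGraph F d).induce (T : Set (Fin m))) :=
      isPathGraph_of_acyclic_path htree.IsAcyclic P hP _ hsets
    have hsub := hyp T hPG
    have hinj' : Function.Injective (fun x : (T : Set (Fin m)) => F x.val) :=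
      fun x y hxy => Subtype.ext (hinj hxy)
    have hcard' : ∀ x : (T : Set (Fin m)), (F x.val).card = d := fun x => hcard _
    have hLCsub : LCond (fun x : (T : Set (Fin m)) => F x.val) d :=
      (lemmaA (k := k) hinj' hcard').1 hsub
    have hch := hLCsub A ⟨i, (hsets i).2 P.start_mem_support⟩
      ⟨j, (hsets j).2 P.end_mem_support⟩ hFi hFj
    have hstep : ∀ (a b : (T : Set (Fin m))),
        StepRel (fun x : (T : Set (Fin m)) => F x.val) d A a b →
        StepRel F d A a.val b.val :=
      fun a b hab => ⟨hab.1, hab.2.1, fun he => hab.2.2.1 (Subtype.ext he), hab.2.2.2⟩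
    exact hch.lift (p := StepRel F d A) Subtype.val hstep
end
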